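/- arXiv:1710.01641 — 4 statements merged into one kernel-verified Lean document; each statement's English description precedes it below -/
import Mathlib

section
/- Suppose sup_{x,x' ∈ X} |⟪φ(x), φ(x')⟫_{H'} − ⟪Φ(x), Φ(x')⟫_H| ≤ δ for some δ ≥ 0. Then for every M ≥ 1, N ≥ 1, every choice of points z_1,…,z_M ∈ X and x_1,…,x_N ∈ X, and every choice of weights w_1,…,w_M ∈ ℝ with ∑_{m=1}^M |w_m| ≤ 1, one has | ‖∑_{m=1}^M w_m φ(z_m) − (1/N) ∑_{n=1}^N φ(x_n)‖_{H'} − ‖∑_{m=1}^M w_m Φ(z_m) − (1/N) ∑_{n=1}^N Φ(x_n)‖_H | ≤ 2√δ. -/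
open scoped RealInnerProductSpace

private lemma norm_sq_expand {X K : Type*} [NormedAddCommGroup K]
    [InnerProductSpace ℝ K] {ι : Type*} [Fintype ι]
    (c : ι → ℝ) (p : ι → X) (f : X → K) :
    ‖∑ i, c i • f (p i)‖ ^ 2 = ∑ i, ∑ j, c i * c j * ⟪f (p i), f (p j)⟫ := by
  rw [← real_inner_self_eq_norm_sq, sum_inner]
  refine Finset.sum_congr rfl fun i _ => ?_
  rw [inner_sum]
  refine Finset.sum_congr rfl fun j _ => ?_
  rw [real_inner_smul_left, real_inner_smul_right]
  ring

private lemma sum_rewrite {X K : Type*} [NormedAddCommGroup K] [Module ℝ K]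
    {M N : ℕ} (hN0 : (N : ℝ) ≠ 0) (z : Fin M → X) (x : Fin N → X)
    (w : Fin M → ℝ) (f : X → K) :
    (∑ m, w m • f (z m)) - (1 / (N : ℝ)) • ∑ n, f (x n)
      = ∑ i, (Sum.elim w (fun _ => -(1 / (N : ℝ)))) i • f ((Sum.elim z x) i) := by
  rw [Fintype.sum_sum_type]
  simp [Finset.smul_sum, sub_eq_add_neg, ← Finset.sum_neg_distrib, neg_smul]

private lemma abs_sub_le_sqrt (a b : ℝ) (ha : 0 ≤ a) (hb : 0 ≤ b) :
    |a - b| ≤ Real.sqrt |a ^ 2 - b ^ 2| := by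
  have h : |a - b| ^ 2 ≤ |a ^ 2 - b ^ 2| := by
    rcases le_total a b with h | h
    · rw [abs_of_nonpos (by linarith), abs_of_nonpos (by nlinarith)]
      nlinarith
    · rw [abs_of_nonneg (by linarith), abs_of_nonneg (by nlinarith)]
      nlinarith
  calc |a - b| = Real.sqrt (|a - b| ^ 2) := (Real.sqrt_sq (abs_nonneg _)).symm
    _ ≤ Real.sqrt |a ^ 2 - b ^ 2| := Real.sqrt_le_sqrt h

/-- If the random-features kernel `⟪φ ·, φ ·⟫` uniformly approximates the
original kernel `⟪Φ ·, Φ ·⟫` up to `δ`, then for any weighted expansion with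
`∑ |w_m| ≤ 1` the RKHS distances to the empirical KME computed with the two
feature maps differ by at most `2 √δ`. -/
theorem stmt_3 {X H H' : Type*}
    [NormedAddCommGroup H] [InnerProductSpace ℝ H]
    [NormedAddCommGroup H'] [InnerProductSpace ℝ H']
    (Φ : X → H) (φ : X → H') (δ : ℝ) (hδ : 0 ≤ δ)
    (happrox : ∀ x x' : X, |⟪φ x, φ x'⟫ - ⟪Φ x, Φ x'⟫| ≤ δ)
    (M N : ℕ) (hM : 1 ≤ M) (hN : 1 ≤ N)
    (z : Fin M → X) (x : Fin N → X)
    (w : Fin M → ℝ) (hw : ∑ m, |w m| ≤ 1) :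
    |‖(∑ m, w m • φ (z m)) - (1 / (N : ℝ)) • ∑ n, φ (x n)‖
      - ‖(∑ m, w m • Φ (z m)) - (1 / (N : ℝ)) • ∑ n, Φ (x n)‖|
      ≤ 2 * Real.sqrt δ := by
  have hN0 : (N : ℝ) ≠ 0 := by positivity
  set c : Fin M ⊕ Fin N → ℝ := Sum.elim w (fun _ => -(1 / (N : ℝ))) with hc
  set p : Fin M ⊕ Fin N → X := Sum.elim z x with hp
  -- sum of |c| ≤ 2
  have hcsum : ∑ i, |c i| ≤ 2 := by
    rw [Fintype.sum_sum_type]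
    have h2 : ∑ n : Fin N, |c (Sum.inr n)| = 1 := by
      simp [hc, abs_of_nonneg, abs_div]
      field_simp
    have h1 : ∑ m : Fin M, |c (Sum.inl m)| ≤ 1 := by simpa [hc] using hw
    linarith
  have hkey : |‖∑ i, c i • φ (p i)‖ ^ 2 - ‖∑ i, c i • Φ (p i)‖ ^ 2| ≤ 4 * δ := by
    rw [norm_sq_expand, norm_sq_expand, ← Finset.sum_sub_distrib]
    calc |∑ i, (∑ j, c i * c j * ⟪φ (p i), φ (p j)⟫ - ∑ j, c i * c j * ⟪Φ (p i), Φ (p j)⟫)|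
        ≤ ∑ i, ∑ j, |c i| * |c j| * δ := by
          refine (Finset.abs_sum_le_sum_abs _ _).trans (Finset.sum_le_sum fun i _ => ?_)
          rw [← Finset.sum_sub_distrib]
          refine (Finset.abs_sum_le_sum_abs _ _).trans (Finset.sum_le_sum fun j _ => ?_)
          rw [← mul_sub, abs_mul, abs_mul]
          exact mul_le_mul_of_nonneg_left (happrox _ _) (by positivity)
      _ = (∑ i, |c i|) * (∑ j, |c j|) * δ := by
          rw [Finset.sum_mul_sum, Finset.sum_mul]
          exact Finset.sum_congr rfl fun i _ => by rw [Finset.sum_mul]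
      _ ≤ 2 * 2 * δ := by
          have h0 : 0 ≤ ∑ i, |c i| := Finset.sum_nonneg fun i _ => abs_nonneg _
          have h4 := mul_le_mul hcsum hcsum h0 (by norm_num : (0:ℝ) ≤ 2)
          exact mul_le_mul_of_nonneg_right h4 hδ
      _ = 4 * δ := by ring
  rw [show (∑ m, w m • φ (z m)) - (1 / (N : ℝ)) • ∑ n, φ (x n) = ∑ i, c i • φ (p i) from
      sum_rewrite hN0 z x w φ,
    show (∑ m, w m • Φ (z m)) - (1 / (N : ℝ)) • ∑ n, Φ (x n) = ∑ i, c i • Φ (p i) from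
      sum_rewrite hN0 z x w Φ]
  calc |‖∑ i, c i • φ (p i)‖ - ‖∑ i, c i • Φ (p i)‖|
      ≤ Real.sqrt |‖∑ i, c i • φ (p i)‖ ^ 2 - ‖∑ i, c i • Φ (p i)‖ ^ 2| :=
        abs_sub_le_sqrt _ _ (norm_nonneg _) (norm_nonneg _)
    _ ≤ Real.sqrt (4 * δ) := Real.sqrt_le_sqrt hkey
    _ = 2 * Real.sqrt δ := by
        rw [show (4:ℝ) * δ = (2:ℝ)^2 * δ by ring, Real.sqrt_mul (by positivity), Real.sqrt_sq (by norm_num)]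
end

section
/- For every ε > 0, q^{⊗M}({z ∈ X^M : ∃ x ∈ S, inf_{h ∈ span{Φ(z_1),…,Φ(z_M)}} ‖Φ(x) − h‖ ≥ ε}) → 0 as M → ∞. (Combined with the convexity of the distance to a subspace, this yields that the RKHS projection error ‖μ̄ − μ̂‖ of any empirical kernel mean embedding μ̂ = (1/N) ∑_n Φ(x_n) of points x_n ∈ S onto the synthetic-data subspace converges to 0 in probability.) -/
open MeasureTheory Filter Topology Metric Set

/-!
Cover the compact set `S` by finitely many cells `Φ⁻¹' ball (Φ c) (ε / 2)` with `c ∈ S`.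
Each cell is a neighbourhood of a point of the support, so it has positive `q`-measure, and
the probability that `M` i.i.d. samples all miss it decays like `(1 - q cell) ^ M`. Once every
cell is hit by some sample `z m`, each `Φ x` with `x ∈ S` lies within `ε` of `Φ (z m)`, which
belongs to the span.
-/

theorem infDist_span_range_lt_of_mem_ball {𝕜 E ι : Type*} [Semiring 𝕜]
    [SeminormedAddCommGroup E] [Module 𝕜 E] {v : ι → E} {y c : E} {r : ℝ} (m : ι)
    (hy : y ∈ ball c (r / 2)) (hm : v m ∈ ball c (r / 2)) :
    infDist y (Submodule.span 𝕜 (range v) : Set E) < r :=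
  calc infDist y (Submodule.span 𝕜 (range v) : Set E)
      ≤ dist y (v m) := infDist_le_dist_of_mem (Submodule.subset_span ⟨m, rfl⟩)
    _ ≤ dist y c + dist (v m) c := dist_triangle_right _ _ _
    _ < r / 2 + r / 2 := add_lt_add hy hm
    _ = r := add_halves r

theorem measure_pos_of_mem_nhds_of_forall_ball_pos {X : Type*} [PseudoMetricSpace X]
    [MeasurableSpace X] {q : Measure X} {x : X} (hx : ∀ r : ℝ, 0 < r → 0 < q (ball x r))
    {U : Set X} (hU : U ∈ 𝓝 x) : 0 < q U := by
  obtain ⟨r, hr, hball⟩ := Metric.mem_nhds_iff.1 hU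
  exact (hx r hr).trans_le (measure_mono hball)

theorem measure_pi_forall_notMem {Ω : Type*} [MeasurableSpace Ω] (q : Measure Ω)
    [SigmaFinite q] (A : Set Ω) (M : ℕ) :
    Measure.pi (fun _ : Fin M => q) {z | ∀ m, z m ∉ A} = q Aᶜ ^ M := by
  have hset : {z : Fin M → Ω | ∀ m, z m ∉ A} = univ.pi fun _ => Aᶜ := by
    ext z
    simp
  rw [hset, Measure.pi_pi, Finset.prod_const, Finset.card_univ, Fintype.card_fin]

section Sampling

variable {Ω : Type*} [MeasurableSpace Ω] (q : Measure Ω) [IsProbabilityMeasure q]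

theorem tendsto_measure_pi_forall_notMem {A : Set Ω} (hA : MeasurableSet A) (hpos : 0 < q A) :
    Tendsto (fun M : ℕ => Measure.pi (fun _ : Fin M => q) {z | ∀ m, z m ∉ A})
      atTop (𝓝 0) := by
  have hlt : q Aᶜ < 1 := by
    rw [prob_compl_eq_one_sub hA]
    exact ENNReal.sub_lt_self ENNReal.one_ne_top one_ne_zero hpos.ne'
  simpa only [measure_pi_forall_notMem] using ENNReal.tendsto_pow_atTop_nhds_zero_of_lt_one hlt

theorem tendsto_measure_pi_exists_forall_notMem {ι : Type*} (t : Finset ι) {A : ι → Set Ω}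
    (hA : ∀ i ∈ t, MeasurableSet (A i)) (hpos : ∀ i ∈ t, 0 < q (A i)) :
    Tendsto (fun M : ℕ => Measure.pi (fun _ : Fin M => q) {z | ∃ i ∈ t, ∀ m, z m ∉ A i})
      atTop (𝓝 0) := by
  have hsum : Tendsto
      (fun M : ℕ => ∑ i ∈ t, Measure.pi (fun _ : Fin M => q) {z | ∀ m, z m ∉ A i})
      atTop (𝓝 0) := by
    simpa using tendsto_finsetSum t fun i hi =>
      tendsto_measure_pi_forall_notMem q (hA i hi) (hpos i hi)
  refine tendsto_of_tendsto_of_tendsto_of_le_of_le tendsto_const_nhds hsum (fun _ => zero_le)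
    fun M => ?_
  have hunion : {z : Fin M → Ω | ∃ i ∈ t, ∀ m, z m ∉ A i} =
      ⋃ i ∈ t, {z | ∀ m, z m ∉ A i} := by
    ext z
    simp
  rw [hunion]
  exact measure_biUnion_finset_le t _

end Sampling

theorem stmt_10_general {X H : Type*} [MetricSpace X] [CompactSpace X]
    [MeasurableSpace X] [BorelSpace X]
    [NormedAddCommGroup H] [InnerProductSpace ℝ H]
    (Φ : X → H) (hΦ : Continuous Φ)
    (q : Measure X) [IsProbabilityMeasure q]
    (S : Set X) (hS_closed : IsClosed S)
    (hS_supp : ∀ x ∈ S, ∀ r : ℝ, 0 < r → 0 < q (Metric.ball x r))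
    (ε : ℝ) (hε : 0 < ε) :
    Tendsto (fun M : ℕ =>
        Measure.pi (fun _ : Fin M => q)
          {z : Fin M → X | ∃ x ∈ S,
            ε ≤ Metric.infDist (Φ x)
              (Submodule.span ℝ (Set.range fun m => Φ (z m)) : Set H)})
      atTop (nhds 0) := by
  set cell : X → Set X := fun c => Φ ⁻¹' ball (Φ c) (ε / 2)
  have cell_open (c : X) : IsOpen (cell c) := isOpen_ball.preimage hΦ
  have cell_mem_nhds (c : X) : cell c ∈ 𝓝 c :=
    (cell_open c).mem_nhds (mem_ball_self (half_pos hε))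
  obtain ⟨t, htS, hcover⟩ :=
    hS_closed.isCompact.elim_nhds_subcover cell fun c _ => cell_mem_nhds c
  have hmiss := tendsto_measure_pi_exists_forall_notMem q t
    (fun c _ => (cell_open c).measurableSet) fun c hc =>
      measure_pos_of_mem_nhds_of_forall_ball_pos (hS_supp c (htS c hc)) (cell_mem_nhds c)
  refine tendsto_of_tendsto_of_tendsto_of_le_of_le tendsto_const_nhds hmiss (fun _ => zero_le)
    fun M => measure_mono ?_
  rintro z ⟨x, hxS, hfar⟩
  obtain ⟨c, hct, hxc⟩ := mem_iUnion₂.1 (hcover hxS)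
  exact ⟨c, hct, fun m hmc => (infDist_span_range_lt_of_mem_ball m hxc hmc).not_ge hfar⟩

/-- On a compact metric space with a continuous feature map `Φ`, if `S` is a
closed set contained in the support of `q`, then for every `ε > 0` the
probability that some point of `S` has its feature map at RKHS distance at
least `ε` from the span of the feature maps of `M` i.i.d. samples from `q`
tends to `0` as `M → ∞`. -/
theorem stmt_10 {X H : Type*} [MetricSpace X] [CompactSpace X]
    [MeasurableSpace X] [BorelSpace X]
    [NormedAddCommGroup H] [InnerProductSpace ℝ H] [CompleteSpace H]
    (Φ : X → H) (hΦ : Continuous Φ)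
    (q : Measure X) [IsProbabilityMeasure q]
    (S : Set X) (hS_closed : IsClosed S)
    (hS_supp : ∀ x ∈ S, ∀ r : ℝ, 0 < r → 0 < q (Metric.ball x r))
    (ε : ℝ) (hε : 0 < ε) :
    Tendsto (fun M : ℕ =>
        Measure.pi (fun _ : Fin M => q)
          {z : Fin M → X | ∃ x ∈ S,
            ε ≤ Metric.infDist (Φ x)
              (Submodule.span ℝ (Set.range fun m => Φ (z m)) : Set H)})
      atTop (nhds 0) :=
  stmt_10_general Φ hΦ q S hS_closed hS_supp ε hε
end

section
/- For every γ ∈ (0, 1) and every a > 0 there exist constants C > 0 and δ₀ ∈ (0, 1) such that for all δ ∈ (0, δ₀) and all integers M ≥ C·δ^{−(D+a)}, the q^{⊗M}-probability that some point of S is at distance at least δ from all M samples is at most γ: q^{⊗M}({z ∈ (ℝ^D)^M : ∃ x ∈ S, ∀ m ∈ {1,…,M}, ‖x − z_m‖ ≥ δ}) ≤ γ. -/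
open MeasureTheory
open scoped ENNReal

lemma net_exists (D : ℕ)
    (S : Set (EuclideanSpace ℝ (Fin D)))
    (q : Measure (EuclideanSpace ℝ (Fin D))) [IsProbabilityMeasure q]
    (c : ℝ) (hc : 0 < c)
    (hball : ∀ x ∈ S, ∀ r : ℝ, 0 < r → r ≤ 1 →
      ENNReal.ofReal (c * r ^ D) ≤ q (Metric.ball x r))
    (ε : ℝ) (hε0 : 0 < ε) (hε1 : ε ≤ 1) :
    ∃ T : Finset (EuclideanSpace ℝ (Fin D)), ↑T ⊆ S ∧
      (∀ x ∈ S, ∃ y ∈ T, dist x y < ε) ∧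
      (T.card : ℝ) * (c * (ε / 2) ^ D) ≤ 1 := by
  classical
  set P : Finset (EuclideanSpace ℝ (Fin D)) → Prop := fun T => ↑T ⊆ S ∧
    (T : Set (EuclideanSpace ℝ (Fin D))).Pairwise (fun y y' => ε ≤ dist y y') with hP
  have hr0 : 0 < ε / 2 := by linarith
  have hr1 : ε / 2 ≤ 1 := by linarith
  have hpos : 0 < c * (ε / 2) ^ D := by positivity
  -- cardinality bound for any separated set
  have hbound : ∀ T, P T → (T.card : ℝ) * (c * (ε / 2) ^ D) ≤ 1 := by
    intro T ⟨hTS, hTsep⟩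
    have hdisj : (T : Set (EuclideanSpace ℝ (Fin D))).PairwiseDisjoint
        (fun y => Metric.ball y (ε / 2)) := by
      intro y hy y' hy' hne
      have hd : ε ≤ dist y y' := hTsep hy hy' hne
      apply Set.disjoint_left.2
      intro x hx hx'
      simp only [Metric.mem_ball] at hx hx'
      have h1 := dist_triangle y x y'
      rw [dist_comm y x] at h1
      linarith [dist_comm x y']
    have hmeas := measure_biUnion_finset (μ := q) hdisj
      (fun b _ => Metric.isOpen_ball.measurableSet)
    have hsum : (T.card : ℝ≥0∞) * ENNReal.ofReal (c * (ε / 2) ^ D)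
        ≤ q (⋃ y ∈ T, Metric.ball y (ε / 2)) := by
      rw [hmeas]
      calc (T.card : ℝ≥0∞) * ENNReal.ofReal (c * (ε / 2) ^ D)
          = ∑ _y ∈ T, ENNReal.ofReal (c * (ε / 2) ^ D) := by
            rw [Finset.sum_const, nsmul_eq_mul]
        _ ≤ ∑ y ∈ T, q (Metric.ball y (ε / 2)) :=
            Finset.sum_le_sum fun y hy => hball y (hTS hy) _ hr0 hr1
    have h1 : (T.card : ℝ≥0∞) * ENNReal.ofReal (c * (ε / 2) ^ D) ≤ 1 :=
      hsum.trans prob_le_one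
    rw [show ((T.card : ℝ≥0∞)) = ENNReal.ofReal (T.card : ℝ) by simp,
      ← ENNReal.ofReal_mul (by positivity)] at h1
    rw [← ENNReal.ofReal_one, ENNReal.ofReal_le_ofReal_iff (by norm_num)] at h1
    exact h1
  have hcard_le : ∀ T, P T → (T.card : ℝ) ≤ (c * (ε / 2) ^ D)⁻¹ := by
    intro T hT
    have h2 := (le_div_iff₀ hpos).2 (hbound T hT)
    rwa [one_div] at h2
  set s : Set ℕ := {n | ∃ T, P T ∧ T.card = n} with hs
  have hne : s.Nonempty := ⟨0, ∅, ⟨by simp, by simp⟩, rfl⟩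
  have hbdd : BddAbove s := by
    refine ⟨Nat.ceil ((c * (ε / 2) ^ D)⁻¹), ?_⟩
    rintro n ⟨T, hT, rfl⟩
    have h1 := (hcard_le T hT).trans (Nat.le_ceil _)
    exact_mod_cast h1
  obtain ⟨T, hT, hTcard⟩ := Nat.sSup_mem hne hbdd
  refine ⟨T, hT.1, ?_, hbound T hT⟩
  intro x hx
  by_contra hcon
  push_neg at hcon
  have hxT : x ∉ T := fun hxT => absurd (hcon x hxT) (by simp [hε0.not_ge])
  have hP' : P (insert x T) := by
    constructor
    · rw [Finset.coe_insert]
      exact Set.insert_subset hx hT.1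
    · rw [Finset.coe_insert]
      apply hT.2.insert
      intro y hy hne
      constructor
      · exact hcon y hy
      · rw [dist_comm]; exact hcon y hy
  have hmem : (insert x T).card ∈ s := ⟨_, hP', rfl⟩
  have hle := le_csSup hbdd hmem
  rw [Finset.card_insert_of_notMem hxT, hTcard] at hle
  omega

set_option maxHeartbeats 1000000 in
/-- Quantitative covering of `S` by i.i.d. samples: under a ball lower bound
`q(B(x,r)) ≥ c·r^D` on `S`, for every `γ ∈ (0,1)` and `a > 0` there are
`C > 0` and `δ₀ ∈ (0,1)` such that for all `δ ∈ (0,δ₀)` and all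
`M ≥ C·δ^{-(D+a)}`, the probability that some point of `S` is at distance at
least `δ` from all `M` samples is at most `γ`. -/
theorem stmt_12 (D : ℕ) (hD : 1 ≤ D)
    (S : Set (EuclideanSpace ℝ (Fin D))) (hS : Bornology.IsBounded S)
    (q : Measure (EuclideanSpace ℝ (Fin D))) [IsProbabilityMeasure q]
    (c : ℝ) (hc : 0 < c)
    (hball : ∀ x ∈ S, ∀ r : ℝ, 0 < r → r ≤ 1 →
      ENNReal.ofReal (c * r ^ D) ≤ q (Metric.ball x r))
    (γ : ℝ) (hγ0 : 0 < γ) (hγ1 : γ < 1) (a : ℝ) (ha : 0 < a) :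
    ∃ C : ℝ, 0 < C ∧ ∃ δ₀ : ℝ, 0 < δ₀ ∧ δ₀ < 1 ∧
      ∀ δ : ℝ, 0 < δ → δ < δ₀ → ∀ M : ℕ,
        C * δ ^ (-((D : ℝ) + a)) ≤ (M : ℝ) →
        Measure.pi (fun _ : Fin M => q)
            {z : Fin M → EuclideanSpace ℝ (Fin D) |
              ∃ x ∈ S, ∀ m, δ ≤ dist x (z m)}
          ≤ ENNReal.ofReal γ := by
  classical
  set A : ℝ := c⁻¹ * 4 ^ D / γ with hA
  have hApos : 0 < A := by positivity
  set K : ℝ := max (Real.log A) 0 + D / a + 1 with hK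
  have hK1 : 1 ≤ K := by
    rw [hK]
    have h1 : (0:ℝ) ≤ max (Real.log A) 0 := le_max_right _ _
    have h2 : (0:ℝ) ≤ (D:ℝ) / a := by positivity
    linarith
  have hKpos : 0 < K := lt_of_lt_of_le one_pos hK1
  refine ⟨2 ^ D / c * K, by positivity, min (1/2) (c⁻¹ ^ ((D:ℝ)⁻¹)), ?_, ?_, ?_⟩
  · have : (0:ℝ) < c⁻¹ ^ ((D:ℝ)⁻¹) := Real.rpow_pos_of_pos (by positivity) _
    exact lt_min (by norm_num) this
  · exact lt_of_le_of_lt (min_le_left _ _) (by norm_num)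
  intro δ hδ0 hδ1 M hM
  have hδhalf : δ < 1/2 := lt_of_lt_of_le hδ1 (min_le_left _ _)
  have hδ1' : δ < 1 := by linarith
  have hδc : δ ^ D ≤ c⁻¹ := by
    have hδle : δ ≤ c⁻¹ ^ ((D:ℝ)⁻¹) := le_of_lt (lt_of_lt_of_le hδ1 (min_le_right _ _))
    have hDne : ((D:ℝ)) ≠ 0 := by positivity
    have key : (c⁻¹ ^ ((D:ℝ)⁻¹) : ℝ) ^ D = c⁻¹ := by
      rw [← Real.rpow_natCast (c⁻¹ ^ ((D:ℝ)⁻¹)) D, ← Real.rpow_mul (by positivity),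
        inv_mul_cancel₀ hDne, Real.rpow_one]
    calc δ ^ D ≤ (c⁻¹ ^ ((D:ℝ)⁻¹)) ^ D := pow_le_pow_left₀ hδ0.le hδle D
      _ = c⁻¹ := key
  set p : ℝ := c * (δ / 2) ^ D with hp
  have hp0 : 0 < p := by positivity
  have hp1 : p ≤ 1 := by
    have h2D : (1:ℝ) ≤ 2 ^ D := one_le_pow₀ (by norm_num)
    have : p = c * δ ^ D / 2 ^ D := by rw [hp, div_pow]; ring
    rw [this]
    have hcd : c * δ ^ D ≤ 1 := by
      calc c * δ ^ D ≤ c * c⁻¹ := by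
            exact mul_le_mul_of_nonneg_left hδc hc.le
        _ = 1 := mul_inv_cancel₀ hc.ne'
    calc c * δ ^ D / 2 ^ D ≤ 1 / 2 ^ D := by
          gcongr
        _ ≤ 1 := by
          rw [div_le_one (by positivity)]; exact h2D
  -- obtain the net at scale δ/2
  obtain ⟨T, hTS, hTnet, hTbound⟩ := net_exists D S q c hc hball (δ/2)
    (by linarith) (by linarith)
  have hq4 : (0:ℝ) < c * (δ/2/2) ^ D := by positivity
  have hcardN : (T.card : ℝ) ≤ (c * (δ/2/2) ^ D)⁻¹ := by
    have h2 := (le_div_iff₀ hq4).2 hTbound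
    rwa [one_div] at h2
  -- union bound over the net
  have hsubset : {z : Fin M → EuclideanSpace ℝ (Fin D) |
        ∃ x ∈ S, ∀ m, δ ≤ dist x (z m)} ⊆
      ⋃ y ∈ T, Set.pi Set.univ (fun _ : Fin M => (Metric.ball y (δ/2))ᶜ) := by
    rintro z ⟨x, hxS, hz⟩
    obtain ⟨y, hyT, hxy⟩ := hTnet x hxS
    refine Set.mem_biUnion hyT ?_
    intro m _
    simp only [Set.mem_compl_iff, Metric.mem_ball, not_lt]
    have h1 := dist_triangle x y (z m)
    have h2 := hz m
    have h3 := dist_comm (z m) y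
    linarith
  have hAy : ∀ y : EuclideanSpace ℝ (Fin D), y ∈ T →
      Measure.pi (fun _ : Fin M => q)
        (Set.pi Set.univ (fun _ : Fin M => (Metric.ball y (δ/2))ᶜ))
      ≤ ENNReal.ofReal ((1 - p) ^ M) := by
    intro y hyT
    rw [Measure.pi_pi]
    have hqb : ENNReal.ofReal p ≤ q (Metric.ball y (δ/2)) :=
      hball y (hTS hyT) (δ/2) (by linarith) (by linarith)
    have hqc : q ((Metric.ball y (δ/2))ᶜ) ≤ ENNReal.ofReal (1 - p) := by
      rw [prob_compl_eq_one_sub Metric.isOpen_ball.measurableSet,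
        ENNReal.ofReal_sub 1 hp0.le, ENNReal.ofReal_one]
      exact tsub_le_tsub_left hqb 1
    calc ∏ _m : Fin M, q ((Metric.ball y (δ/2))ᶜ)
        ≤ ∏ _m : Fin M, ENNReal.ofReal (1 - p) :=
          Finset.prod_le_prod' fun _ _ => hqc
      _ = ENNReal.ofReal (1 - p) ^ M := by
          rw [Finset.prod_const, Finset.card_univ, Fintype.card_fin]
      _ = ENNReal.ofReal ((1 - p) ^ M) := (ENNReal.ofReal_pow (by linarith) M).symm
  calc Measure.pi (fun _ : Fin M => q)
        {z : Fin M → EuclideanSpace ℝ (Fin D) | ∃ x ∈ S, ∀ m, δ ≤ dist x (z m)}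
      ≤ Measure.pi (fun _ : Fin M => q)
          (⋃ y ∈ T, Set.pi Set.univ (fun _ : Fin M => (Metric.ball y (δ/2))ᶜ)) :=
        measure_mono hsubset
    _ ≤ ∑ y ∈ T, Measure.pi (fun _ : Fin M => q)
          (Set.pi Set.univ (fun _ : Fin M => (Metric.ball y (δ/2))ᶜ)) :=
        measure_biUnion_finset_le T _
    _ ≤ ∑ _y ∈ T, ENNReal.ofReal ((1 - p) ^ M) := Finset.sum_le_sum hAy
    _ = (T.card : ℝ≥0∞) * ENNReal.ofReal ((1 - p) ^ M) := by
        rw [Finset.sum_const, nsmul_eq_mul]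
    _ = ENNReal.ofReal ((T.card : ℝ) * (1 - p) ^ M) := by
        rw [ENNReal.ofReal_mul (by positivity)]; simp
    _ ≤ ENNReal.ofReal γ := by
        apply ENNReal.ofReal_le_ofReal
        have ht0 : 0 < δ ^ (-a : ℝ) := Real.rpow_pos_of_pos hδ0 _
        have ht1 : 1 ≤ δ ^ (-a : ℝ) :=
          Real.one_le_rpow_of_pos_of_le_one_of_nonpos hδ0 hδ1'.le (by linarith)
        set t := δ ^ (-a : ℝ) with htdef
        have hpM : K * t ≤ p * M := by
          have h1 : p * (2 ^ D / c * K * δ ^ (-((D:ℝ) + a))) ≤ p * M :=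
            mul_le_mul_of_nonneg_left hM hp0.le
          have h2 : δ ^ D * δ ^ (-((D:ℝ) + a)) = t := by
            rw [htdef, ← Real.rpow_natCast δ D, ← Real.rpow_add hδ0]
            congr 1
            ring
          have h3 : p * (2 ^ D / c * K * δ ^ (-((D:ℝ) + a)))
              = K * (δ ^ D * δ ^ (-((D:ℝ) + a))) := by
            rw [hp, div_pow]
            field_simp
          rw [h3, h2] at h1
          exact h1
        have hN : (c * (δ/2/2) ^ D)⁻¹ ≤ γ * Real.exp (K * t) := by
          have hδD : (0:ℝ) < δ ^ D := by positivity
          have hrw : (c * (δ/2/2) ^ D)⁻¹ = γ * (A * (δ ^ D)⁻¹) := by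
            rw [hA, show δ/2/2 = δ/4 by ring, div_pow]
            field_simp
          rw [hrw]
          have hu : 0 < A * (δ ^ D)⁻¹ := by positivity
          have e2 : Real.log t = -a * Real.log δ := Real.log_rpow hδ0 _
          have e3 : Real.log t ≤ t := (Real.log_le_sub_one_of_pos ht0).trans (by linarith)
          have e5 : Real.log A ≤ max (Real.log A) 0 * t := by
            calc Real.log A ≤ max (Real.log A) 0 := le_max_left _ _
              _ = max (Real.log A) 0 * 1 := (mul_one _).symm
              _ ≤ max (Real.log A) 0 * t :=
                  mul_le_mul_of_nonneg_left ht1 (le_max_right _ _)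
          have hlog : Real.log (A * (δ ^ D)⁻¹) ≤ K * t := by
            calc Real.log (A * (δ ^ D)⁻¹)
                = Real.log A - D * Real.log δ := by
                  rw [Real.log_mul hApos.ne' (by positivity), Real.log_inv, Real.log_pow]
                  ring
              _ = Real.log A + (D / a) * Real.log t := by
                  rw [e2]
                  field_simp
                  ring
              _ ≤ max (Real.log A) 0 * t + (D / a) * t :=
                  add_le_add e5 (mul_le_mul_of_nonneg_left e3 (by positivity))
              _ ≤ K * t := by
                  rw [hK]
                  nlinarith [ht0.le]
          have hexp : A * (δ ^ D)⁻¹ ≤ Real.exp (K * t) := by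
            calc A * (δ ^ D)⁻¹ = Real.exp (Real.log (A * (δ ^ D)⁻¹)) :=
                  (Real.exp_log hu).symm
              _ ≤ Real.exp (K * t) := Real.exp_le_exp.2 hlog
          exact mul_le_mul_of_nonneg_left hexp hγ0.le
        have h1p : (0:ℝ) ≤ 1 - p := by linarith
        have hexpM : (1 - p) ^ M ≤ Real.exp (-(p * M)) := by
          calc (1 - p) ^ M ≤ Real.exp (-p) ^ M :=
                pow_le_pow_left₀ h1p (by linarith [Real.add_one_le_exp (-p)]) M
            _ = Real.exp ((M : ℝ) * (-p)) := (Real.exp_nat_mul _ M).symm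
            _ = Real.exp (-(p * M)) := by congr 1; ring
        calc (T.card : ℝ) * (1 - p) ^ M
            ≤ (c * (δ/2/2) ^ D)⁻¹ * Real.exp (-(p * M)) := by
              apply mul_le_mul hcardN hexpM (pow_nonneg h1p M) (by positivity)
          _ ≤ (γ * Real.exp (K * t)) * Real.exp (-(p * M)) :=
              mul_le_mul_of_nonneg_right hN (Real.exp_nonneg _)
          _ ≤ (γ * Real.exp (p * M)) * Real.exp (-(p * M)) := by
              have h := Real.exp_le_exp.2 hpM
              gcongr
          _ = γ := by
              rw [mul_assoc, ← Real.exp_add]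
              simp
end

section
/- For every γ ∈ (0, 1) and every a > 0 there exist constants C > 0 and ε₀ > 0 such that for all ε ∈ (0, ε₀) and all integers M ≥ C·ε^{−2D−a}, with q^{⊗M}-probability at least 1 − γ over the synthetic points (z_1,…,z_M) the following holds: for every N ≥ 1 and every x_1,…,x_N ∈ S, the distance of the empirical kernel mean embedding to the synthetic-data subspace satisfies inf_{h ∈ span{Φ(z_1),…,Φ(z_M)}} ‖(1/N) ∑_{n=1}^N Φ(x_n) − h‖ < ε. -/
open MeasureTheory
open scoped RealInnerProductSpace

/-!
Cover `S` by a maximal `2δ`-separated net `T ⊆ S`. The `δ`-balls around its points are disjoint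
and each has `q`-mass at least `w = c δ^D`, so `#T ≤ 1 / w`. If each of them contains a synthetic
point, every `x ∈ S` is within `3δ` of some `z_m`, and the Lipschitz kernel gives
`‖Φ x - Φ z_m‖² ≤ 6 L δ = ε²` for `δ = ε² / (6L)`; averaging puts every empirical mean embedding
within `ε` of the span. By a union bound over `T`, some ball is missed with probability at most
`#T (1 - w)^M ≤ exp (-w M) / w`. For `C = (6L)^D / c` and `M ≥ C ε^(-2D-a)` we have `w M ≥ ε^(-a)`,
so this is at most `C ε^(-2D) exp (-ε^(-a))`, which tends to `0` as `ε → 0`.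
-/

open Metric Set Filter Topology
open scoped ENNReal NNReal

def KernelLipschitzWith {E H : Type*} [SeminormedAddCommGroup E] [NormedAddCommGroup H]
    [InnerProductSpace ℝ H] (L : ℝ) (Φ : E → H) : Prop :=
  ∀ x y, |⟪Φ x, Φ y⟫ - ⟪Φ x, Φ x⟫| ≤ L * ‖x - y‖

namespace KernelLipschitzWith

variable {E H : Type*} [SeminormedAddCommGroup E] [NormedAddCommGroup H] [InnerProductSpace ℝ H]
  {L : ℝ} {Φ : E → H}

lemma norm_sub_sq_le (hΦ : KernelLipschitzWith L Φ) (x y : E) :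
    ‖Φ x - Φ y‖ ^ 2 ≤ 2 * L * ‖x - y‖ := by
  have hxy := (abs_le.mp (hΦ x y)).1
  have hyx := (abs_le.mp (hΦ y x)).1
  rw [norm_sub_rev y x] at hyx
  rw [norm_sub_sq_real, ← real_inner_self_eq_norm_sq, ← real_inner_self_eq_norm_sq,
    real_inner_comm (Φ y) (Φ x)] at *
  linarith

lemma norm_sub_lt (hΦ : KernelLipschitzWith L Φ) {x y : E} {ε : ℝ} (hε : 0 < ε)
    (hxy : 2 * L * ‖x - y‖ < ε ^ 2) : ‖Φ x - Φ y‖ < ε :=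
  lt_of_pow_lt_pow_left₀ 2 hε.le ((hΦ.norm_sub_sq_le x y).trans_lt hxy)

end KernelLipschitzWith

lemma infDist_smul_sum_span_lt {E : Type*} [SeminormedAddCommGroup E] [NormedSpace ℝ E]
    {N : ℕ} (hN : 0 < N) (v : Fin N → E) {s : Set E} {ε : ℝ}
    (hv : ∀ n, ∃ u ∈ s, ‖v n - u‖ < ε) :
    infDist ((1 / (N : ℝ)) • ∑ n, v n) (Submodule.span ℝ s : Set E) < ε := by
  choose u hus hvu using hv
  have hN' : (0 : ℝ) < N := Nat.cast_pos.mpr hN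
  have hmem : (1 / (N : ℝ)) • ∑ n, u n ∈ (Submodule.span ℝ s : Set E) :=
    Submodule.smul_mem _ _ (Submodule.sum_mem _ fun n _ => Submodule.subset_span (hus n))
  calc infDist ((1 / (N : ℝ)) • ∑ n, v n) (Submodule.span ℝ s : Set E)
      ≤ ‖(1 / (N : ℝ)) • ∑ n, v n - (1 / (N : ℝ)) • ∑ n, u n‖ :=
        (infDist_le_dist_of_mem hmem).trans_eq (dist_eq_norm _ _)
    _ ≤ 1 / N * ∑ n, ‖v n - u n‖ := by
        rw [← smul_sub, ← Finset.sum_sub_distrib, norm_smul, Real.norm_of_nonneg (by positivity)]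
        gcongr
        exact norm_sum_le _ _
    _ < 1 / N * ∑ _n : Fin N, ε := mul_lt_mul_of_pos_left
        (Finset.sum_lt_sum_of_nonempty ⟨⟨0, hN⟩, Finset.mem_univ _⟩ fun n _ => hvu n)
        (by positivity)
    _ = ε := by simp [field]

lemma KernelLipschitzWith.infDist_smul_sum_span_lt {E H ι : Type*} [SeminormedAddCommGroup E]
    [NormedAddCommGroup H] [InnerProductSpace ℝ H] {L : ℝ} {Φ : E → H}
    (hΦ : KernelLipschitzWith L Φ) {ε : ℝ} (hε : 0 < ε) {N : ℕ} (hN : 0 < N) (x : Fin N → E)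
    (z : ι → E) (hxz : ∀ n, ∃ m, 2 * L * ‖x n - z m‖ < ε ^ 2) :
    infDist ((1 / (N : ℝ)) • ∑ n, Φ (x n)) (Submodule.span ℝ (range fun m => Φ (z m)) : Set H)
      < ε :=
  _root_.infDist_smul_sum_span_lt hN _ fun n =>
    let ⟨m, hm⟩ := hxz n
    ⟨Φ (z m), mem_range_self m, hΦ.norm_sub_lt hε hm⟩

lemma Metric.exists_dist_lt_of_subset_iUnion_closedBall {X ι : Type*} [PseudoMetricSpace X]
    {S T : Set X} {z : ι → X} {δ : ℝ} (hcover : S ⊆ ⋃ t ∈ T, closedBall t (2 * δ))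
    (hz : ∀ t ∈ T, ∃ m, z m ∈ ball t δ) {x : X} (hx : x ∈ S) : ∃ m, dist x (z m) < 3 * δ := by
  obtain ⟨t, htT, hxt⟩ : ∃ t ∈ T, x ∈ closedBall t (2 * δ) := by simpa using hcover hx
  obtain ⟨m, hzm⟩ := hz t htT
  exact ⟨m, by linarith [dist_triangle_right x (z m) t, mem_closedBall.1 hxt, mem_ball.1 hzm]⟩

namespace Metric

variable {X : Type*} [PseudoMetricSpace X] [MeasurableSpace X] [OpensMeasurableSpace X]
  (q : Measure X) {δ : ℝ≥0} {w : ℝ≥0∞}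

lemma IsSeparated.encard_mul_le_measure_univ {C : Set X}
    (hC : IsSeparated (2 * δ : ℝ≥0) C) (hq : ∀ t ∈ C, w ≤ q (ball t δ)) :
    C.encard * w ≤ q univ :=
  calc (C.encard : ℝ≥0∞) * w = ∑' _ : C, w := (ENNReal.tsum_const w).symm
    _ ≤ ∑' t : C, q (ball t δ) := ENNReal.tsum_le_tsum fun t => hq t t.2
    _ ≤ q (⋃ t : C, ball t δ) := by
      refine tsum_meas_le_meas_iUnion_of_disjoint q (fun _ => measurableSet_ball) ?_
      rintro ⟨s, hs⟩ ⟨t, ht⟩ hst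
      refine ball_disjoint_ball ?_
      have : ((2 * δ : ℝ≥0) : ℝ≥0∞) < edist s t := hC hs ht (by simpa using hst)
      rw [edist_nndist, ENNReal.coe_lt_coe, ← NNReal.coe_lt_coe, coe_nndist] at this
      push_cast at this
      linarith
    _ ≤ q univ := measure_mono (subset_univ _)

lemma packingNumber_mul_le_measure_univ {A : Set X} (hq : ∀ t ∈ A, w ≤ q (ball t δ)) :
    packingNumber (2 * δ) A * w ≤ q univ := by
  simp only [packingNumber, ENat.toENNReal_iSup, ENNReal.iSup_mul, iSup_le_iff]
  exact fun C hCA hC => hC.encard_mul_le_measure_univ q fun t ht => hq t (hCA ht)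

lemma exists_finset_subset_cover_card_mul_le [IsFiniteMeasure q] (hw : w ≠ 0) {A : Set X}
    (hq : ∀ t ∈ A, w ≤ q (ball t δ)) :
    ∃ T : Finset X, ↑T ⊆ A ∧ A ⊆ ⋃ t ∈ T, closedBall t (2 * δ) ∧ T.card * w ≤ q univ := by
  have hpack : packingNumber (2 * δ) A ≠ ⊤ := by
    rw [← ENat.toENNReal_ne_top]
    refine ne_top_of_le_ne_top (ENNReal.div_ne_top (measure_ne_top q univ) hw) ?_
    exact ENNReal.le_div_iff_mul_le (Or.inl hw) (Or.inr (measure_ne_top q univ)) |>.2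
      (packingNumber_mul_le_measure_univ q hq)
  have hfin : (maximalSeparatedSet (2 * δ) A).Finite := by
    rw [← encard_ne_top_iff, encard_maximalSeparatedSet hpack]; exact hpack
  refine ⟨hfin.toFinset, by simpa using maximalSeparatedSet_subset, ?_, ?_⟩
  · simpa [isCover_iff_subset_iUnion_closedBall] using isCover_maximalSeparatedSet hpack
  · have := isSeparated_maximalSeparatedSet.encard_mul_le_measure_univ q
      fun t ht => hq t (maximalSeparatedSet_subset ht)
    simpa [hfin.encard_eq_coe_toFinset_card] using this

end Metric

section Sampling

variable {X : Type*} [MeasurableSpace X] (q : Measure X)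

lemma measure_pi_exists_forall_notMem_le [SigmaFinite q] {ι : Type*} (T : Finset ι)
    (A : ι → Set X) (M : ℕ) :
    Measure.pi (fun _ : Fin M => q) {z | ∃ t ∈ T, ∀ m, z m ∉ A t} ≤ ∑ t ∈ T, q (A t)ᶜ ^ M := by
  have hbad : {z : Fin M → X | ∃ t ∈ T, ∀ m, z m ∉ A t} = ⋃ t ∈ T, univ.pi fun _ => (A t)ᶜ := by
    ext z; simp
  rw [hbad]
  refine (measure_biUnion_finset_le T _).trans (Finset.sum_le_sum fun t _ => ?_)
  simp [Measure.pi_pi]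

lemma prob_compl_le_ofReal_exp_neg [IsProbabilityMeasure q] {A : Set X} (hA : MeasurableSet A)
    {w : ℝ} (hw : ENNReal.ofReal w ≤ q A) : q Aᶜ ≤ ENNReal.ofReal (Real.exp (-w)) :=
  calc q Aᶜ = 1 - q A := prob_compl_eq_one_sub hA
    _ ≤ 1 - ENNReal.ofReal w := tsub_le_tsub_left hw 1
    _ ≤ ENNReal.ofReal (1 - w) := by
      rcases le_total 0 w with hw0 | hw0
      · rw [ENNReal.ofReal_sub _ hw0, ENNReal.ofReal_one]
      · rw [ENNReal.ofReal_of_nonpos hw0, tsub_zero, ← ENNReal.ofReal_one]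
        exact ENNReal.ofReal_le_ofReal (by linarith)
    _ ≤ ENNReal.ofReal (Real.exp (-w)) := ENNReal.ofReal_le_ofReal (Real.one_sub_le_exp_neg w)

lemma one_sub_le_measure_pi_forall_exists_mem [IsProbabilityMeasure q] {ι : Type*}
    (T : Finset ι) {A : ι → Set X} (hA : ∀ t ∈ T, MeasurableSet (A t)) {w : ℝ}
    (hw : ∀ t ∈ T, ENNReal.ofReal w ≤ q (A t)) (M : ℕ) :
    1 - ENNReal.ofReal (T.card * Real.exp (-(w * M))) ≤
      Measure.pi (fun _ : Fin M => q) {z | ∀ t ∈ T, ∃ m, z m ∈ A t} := by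
  set good := {z : Fin M → X | ∀ t ∈ T, ∃ m, z m ∈ A t}
  have hbad : Measure.pi (fun _ : Fin M => q) goodᶜ ≤
      ENNReal.ofReal (T.card * Real.exp (-(w * M))) :=
    calc Measure.pi (fun _ : Fin M => q) goodᶜ
        = Measure.pi (fun _ : Fin M => q) {z | ∃ t ∈ T, ∀ m, z m ∉ A t} := by
          congr 1; ext z; simp [good]
      _ ≤ ∑ t ∈ T, q (A t)ᶜ ^ M := measure_pi_exists_forall_notMem_le q T A M
      _ ≤ ∑ _t ∈ T, ENNReal.ofReal (Real.exp (-w)) ^ M :=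
          Finset.sum_le_sum fun t ht => pow_le_pow_left₀ zero_le
            (prob_compl_le_ofReal_exp_neg q (hA t ht) (hw t ht)) M
      _ = ENNReal.ofReal (T.card * Real.exp (-(w * M))) := by
          rw [Finset.sum_const, nsmul_eq_mul, ← ENNReal.ofReal_pow (Real.exp_pos _).le,
            ← Real.exp_nat_mul, ENNReal.ofReal_mul (Nat.cast_nonneg _), ENNReal.ofReal_natCast]
          ring_nf
  rw [tsub_le_iff_right, ← measure_univ (μ := Measure.pi fun _ : Fin M => q)]
  exact (measure_univ_le_add_compl good).trans (add_le_add_right hbad _)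

end Sampling

lemma exists_finset_cover_one_sub_le_measure_pi {X : Type*} [PseudoMetricSpace X]
    [MeasurableSpace X] [OpensMeasurableSpace X] (q : Measure X) [IsProbabilityMeasure q]
    {S : Set X} {δ : ℝ≥0} {w : ℝ} (hw : 0 < w) (hq : ∀ t ∈ S, ENNReal.ofReal w ≤ q (ball t δ))
    (M : ℕ) :
    ∃ T : Finset X, S ⊆ ⋃ t ∈ T, closedBall t (2 * δ) ∧
      1 - ENNReal.ofReal (Real.exp (-(w * M)) / w) ≤
        Measure.pi (fun _ : Fin M => q) {z | ∀ t ∈ T, ∃ m, z m ∈ ball t δ} := by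
  obtain ⟨T, hTS, hcover, hcard⟩ :=
    exists_finset_subset_cover_card_mul_le q (by positivity : ENNReal.ofReal w ≠ 0) hq
  rw [measure_univ, ← ENNReal.ofReal_natCast, ← ENNReal.ofReal_mul (Nat.cast_nonneg _),
    ENNReal.ofReal_le_one, ← le_div_iff₀ hw] at hcard
  refine ⟨T, hcover, le_trans ?_ (one_sub_le_measure_pi_forall_exists_mem q T
    (fun _ _ => measurableSet_ball) (fun t ht => hq t (hTS ht)) M)⟩
  gcongr
  calc (T.card : ℝ) * Real.exp (-(w * M)) ≤ 1 / w * Real.exp (-(w * M)) := by gcongr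
    _ = Real.exp (-(w * M)) / w := by ring

lemma tendsto_rpow_neg_mul_exp_neg_rpow_neg (b : ℝ) {a : ℝ} (ha : 0 < a) :
    Tendsto (fun ε : ℝ => ε ^ (-b) * Real.exp (-ε ^ (-a))) (𝓝[>] 0) (𝓝 0) := by
  have h := (tendsto_rpow_mul_exp_neg_mul_atTop_nhds_zero (b / a) 1 one_pos).comp
    (tendsto_rpow_neg_nhdsGT_zero (neg_lt_zero.mpr ha))
  refine h.congr' (eventually_nhdsWithin_of_forall fun ε (hε : 0 < ε) => ?_)
  simp only [Function.comp_apply, neg_one_mul, ← Real.rpow_mul hε.le]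
  congr 2
  field_simp

lemma eventually_exp_neg_div_le (b : ℕ) {A a γ : ℝ} (hA : 0 < A) (ha : 0 < a) (hγ : 0 < γ) :
    ∀ᶠ ε in 𝓝[>] 0, ∀ M : ℝ, A⁻¹ * ε ^ (-((b : ℝ) + a)) ≤ M →
      Real.exp (-(A * ε ^ b * M)) / (A * ε ^ b) ≤ γ := by
  filter_upwards [self_mem_nhdsWithin,
    (tendsto_rpow_neg_mul_exp_neg_rpow_neg b ha).eventually_le_const (mul_pos hA hγ)]
    with ε (hε : 0 < ε) hsmall M hM
  have hεb : ε ^ (b : ℝ) * ε ^ (-((b : ℝ) + a)) = ε ^ (-a) := by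
    rw [← Real.rpow_add hε]; ring_nf
  have hexponent : ε ^ (-a) ≤ A * ε ^ b * M :=
    calc ε ^ (-a) = A * ε ^ b * (A⁻¹ * ε ^ (-((b : ℝ) + a))) := by
          rw [← hεb, Real.rpow_natCast]; field_simp
      _ ≤ A * ε ^ b * M := by gcongr
  calc Real.exp (-(A * ε ^ b * M)) / (A * ε ^ b) ≤ Real.exp (-ε ^ (-a)) / (A * ε ^ b) := by
        gcongr
    _ = ε ^ (-(b : ℝ)) * Real.exp (-ε ^ (-a)) / A := by
        rw [Real.rpow_neg hε.le (b : ℝ), Real.rpow_natCast]; field_simp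
    _ ≤ γ := by rwa [div_le_iff₀ hA, mul_comm γ]

theorem stmt_13_general (D : ℕ)
    (S : Set (EuclideanSpace ℝ (Fin D)))
    {H : Type*} [NormedAddCommGroup H] [InnerProductSpace ℝ H]
    (Φ : EuclideanSpace ℝ (Fin D) → H) (L : ℝ) (hL : 0 < L)
    (hLip : ∀ x y : EuclideanSpace ℝ (Fin D),
      |⟪Φ x, Φ y⟫ - ⟪Φ x, Φ x⟫| ≤ L * ‖x - y‖)
    (q : Measure (EuclideanSpace ℝ (Fin D))) [IsProbabilityMeasure q]
    (c : ℝ) (hc : 0 < c)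
    (hball : ∀ x ∈ S, ∀ r : ℝ, 0 < r → r ≤ 1 →
      ENNReal.ofReal (c * r ^ D) ≤ q (Metric.ball x r))
    (γ : ℝ) (hγ0 : 0 < γ) (a : ℝ) (ha : 0 < a) :
    ∃ C : ℝ, 0 < C ∧ ∃ ε₀ : ℝ, 0 < ε₀ ∧
      ∀ ε : ℝ, 0 < ε → ε < ε₀ → ∀ M : ℕ,
        C * ε ^ (-(2 * (D : ℝ) + a)) ≤ (M : ℝ) →
        1 - ENNReal.ofReal γ ≤
          Measure.pi (fun _ : Fin M => q)
            {z : Fin M → EuclideanSpace ℝ (Fin D) |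
              ∀ N : ℕ, 1 ≤ N → ∀ x : Fin N → EuclideanSpace ℝ (Fin D),
                (∀ n, x n ∈ S) →
                Metric.infDist ((1 / (N : ℝ)) • ∑ n, Φ (x n))
                  (Submodule.span ℝ (Set.range fun m => Φ (z m)) : Set H)
                  < ε} := by
  set A : ℝ := c / (6 * L) ^ D
  have hA : 0 < A := by positivity
  have hradius : ∀ᶠ ε in 𝓝[>] 0, ε ^ 2 / (6 * L) ≤ 1 :=
    ((((continuous_pow 2).div_const _).tendsto' 0 0 (by simp)).mono_left
      nhdsWithin_le_nhds).eventually_le_const one_pos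
  obtain ⟨ε₀, hε₀, hsmall⟩ := mem_nhdsGT_iff_exists_Ioo_subset.mp
    (hradius.and (eventually_exp_neg_div_le (2 * D) hA ha hγ0))
  refine ⟨A⁻¹, inv_pos.mpr hA, ε₀, hε₀, fun ε hε hεε₀ M hM => ?_⟩
  obtain ⟨hδ1, hexp⟩ := hsmall ⟨hε, hεε₀⟩
  set δ : ℝ≥0 := ⟨ε ^ 2 / (6 * L), by positivity⟩
  have hδ_eq : (δ : ℝ) = ε ^ 2 / (6 * L) := rfl
  have hq : ∀ t ∈ S, ENNReal.ofReal (A * ε ^ (2 * D)) ≤ q (ball t δ) := fun t ht => by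
    convert hball t ht δ (by rw [hδ_eq]; positivity) hδ1 using 2
    rw [hδ_eq, div_pow, ← pow_mul]; ring
  obtain ⟨T, hcover, hprob⟩ := exists_finset_cover_one_sub_le_measure_pi q (by positivity) hq M
  refine le_trans ?_ (hprob.trans (measure_mono fun z hz N hN x hx => ?_))
  · gcongr
    exact hexp M (by push_cast; exact hM)
  · refine KernelLipschitzWith.infDist_smul_sum_span_lt hLip hε hN x z fun n => ?_
    obtain ⟨m, hm⟩ := exists_dist_lt_of_subset_iUnion_closedBall hcover hz (hx n)
    refine ⟨m, ?_⟩
    calc 2 * L * ‖x n - z m‖ < 2 * L * (3 * δ) := by rw [← dist_eq_norm]; gcongr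
      _ = ε ^ 2 := by rw [hδ_eq]; field_simp; ring

/-- Quantitative projection-error bound for Algorithm 1: with a Lipschitz
kernel and a sampling distribution whose balls on `S` satisfy
`q(B(x,r)) ≥ c·r^D`, for every `γ ∈ (0,1)` and `a > 0` there are `C > 0`
and `ε₀ > 0` such that for all `ε ∈ (0,ε₀)` and `M ≥ C·ε^{-2D-a}`, with
probability at least `1 − γ` over the `M` i.i.d. synthetic points, every
empirical kernel mean embedding of points of `S` is within `ε` of the span of
the feature maps of the synthetic points. -/
theorem stmt_13 (D : ℕ) (hD : 1 ≤ D)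
    (S : Set (EuclideanSpace ℝ (Fin D))) (hS : Bornology.IsBounded S)
    {H : Type*} [NormedAddCommGroup H] [InnerProductSpace ℝ H] [CompleteSpace H]
    (Φ : EuclideanSpace ℝ (Fin D) → H) (L : ℝ) (hL : 0 < L)
    (hLip : ∀ x y : EuclideanSpace ℝ (Fin D),
      |⟪Φ x, Φ y⟫ - ⟪Φ x, Φ x⟫| ≤ L * ‖x - y‖)
    (q : Measure (EuclideanSpace ℝ (Fin D))) [IsProbabilityMeasure q]
    (c : ℝ) (hc : 0 < c)
    (hball : ∀ x ∈ S, ∀ r : ℝ, 0 < r → r ≤ 1 →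
      ENNReal.ofReal (c * r ^ D) ≤ q (Metric.ball x r))
    (γ : ℝ) (hγ0 : 0 < γ) (hγ1 : γ < 1) (a : ℝ) (ha : 0 < a) :
    ∃ C : ℝ, 0 < C ∧ ∃ ε₀ : ℝ, 0 < ε₀ ∧
      ∀ ε : ℝ, 0 < ε → ε < ε₀ → ∀ M : ℕ,
        C * ε ^ (-(2 * (D : ℝ) + a)) ≤ (M : ℝ) →
        1 - ENNReal.ofReal γ ≤
          Measure.pi (fun _ : Fin M => q)
            {z : Fin M → EuclideanSpace ℝ (Fin D) |
              ∀ N : ℕ, 1 ≤ N → ∀ x : Fin N → EuclideanSpace ℝ (Fin D),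
                (∀ n, x n ∈ S) →
                Metric.infDist ((1 / (N : ℝ)) • ∑ n, Φ (x n))
                  (Submodule.span ℝ (Set.range fun m => Φ (z m)) : Set H)
                  < ε} :=
  stmt_13_general D S Φ L hL hLip q c hc hball γ hγ0 a ha
end
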